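/- arXiv:1703.04367 — 6 statements merged into one kernel-verified Lean document; each statement's English description precedes it below -/
import Mathlib

section
/- A population protocol is well-specified and silent if and only if it satisfies Termination and NoSplitTerminal. More precisely: (a) a population protocol is silent if and only if it satisfies Termination, and (b) a silent population protocol is well-specified if and only if it satisfies NoSplitTerminal. -/
/-! Formalization of population protocols (Angluin et al.), following
"Towards Efficient Verification of Population Protocols". -/

namespace PopProt

/-- A transition `(p, q) ↦ (p', q')`. -/
abbrev PTrans (Q : Type*) := Q × Q × Q × Q

variable {Q : Type*} [Fintype Q] [DecidableEq Q]

/-- `pre t` is the multiset of the two states consumed by transition `t`. -/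
def pre (t : PTrans Q) : Multiset Q := {t.1, t.2.1}

/-- `post t` is the multiset of the two states produced by transition `t`. -/
def post (t : PTrans Q) : Multiset Q := {t.2.2.1, t.2.2.2}

/-- A transition is silent if it cannot change the current configuration. -/
def SilentT (t : PTrans Q) : Prop := pre t = post t

instance : DecidablePred (SilentT (Q := Q)) := fun t => by
  unfold SilentT; infer_instance

/-- Transitions of the form `(p, q) ↦ (p, q)`. -/
def IsSilentPair (t : PTrans Q) : Prop := ∃ p q : Q, t = (p, q, p, q)

instance : DecidablePred (IsSilentPair (Q := Q)) := fun t => by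
  unfold IsSilentPair; infer_instance

/-- A population protocol with states `Q` and input alphabet `A`.
Configurations are multisets over `Q` of cardinality at least 2. -/
structure Protocol (Q A : Type*) [Fintype Q] [DecidableEq Q] [Fintype A] where
  T : Finset (PTrans Q)
  total : ∀ p q : Q, ∃ p' q' : Q, (p, q, p', q') ∈ T
  inp : A → Q
  out : Q → Bool

/-- `C →t C'`. -/
def StepBy (t : PTrans Q) (C C' : Multiset Q) : Prop :=
  pre t ≤ C ∧ C' = C - pre t + post t

/-- One step of the protocol with transition set `T`. -/
def Step (T : Finset (PTrans Q)) (C C' : Multiset Q) : Prop :=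
  ∃ t ∈ T, StepBy t C C'

/-- Reachability `C →* C'`. -/
def Reach (T : Finset (PTrans Q)) : Multiset Q → Multiset Q → Prop :=
  Relation.ReflTransGen (Step T)

/-- `C →w C'` for a finite sequence `w` of transitions. -/
def SeqStep (T : Finset (PTrans Q)) : List (PTrans Q) → Multiset Q → Multiset Q → Prop
  | [], C, C' => C' = C
  | t :: w, C, C' => t ∈ T ∧ ∃ D, StepBy t C D ∧ SeqStep T w D C'

/-- An execution: an infinite sequence of configurations related by steps. -/
def IsExec (T : Finset (PTrans Q)) (e : ℕ → Multiset Q) : Prop :=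
  2 ≤ Multiset.card (e 0) ∧ ∀ i, Step T (e i) (e (i + 1))

/-- Fairness: if a step `C → C'` is possible and `C` occurs infinitely often,
then the step is taken infinitely often. -/
def Fair (T : Finset (PTrans Q)) (e : ℕ → Multiset Q) : Prop :=
  ∀ C C' : Multiset Q, Step T C C' →
    {i | e i = C}.Infinite → {j | e j = C ∧ e (j + 1) = C'}.Infinite

/-- An execution is silent if it is eventually constant. -/
def SilentExec (e : ℕ → Multiset Q) : Prop := ∃ n : ℕ, ∀ i ≥ n, e i = e n

/-- A configuration is terminal if every transition enabled at it is silent. -/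
def Terminal (T : Finset (PTrans Q)) (C : Multiset Q) : Prop :=
  ∀ t ∈ T, pre t ≤ C → SilentT t

/-- `C` is a consensus configuration with output `b`. -/
def Consensus (out : Q → Bool) (C : Multiset Q) (b : Bool) : Prop :=
  ∀ q ∈ C, out q = b

/-- An execution stabilizes to `b`. -/
def Stabilizes (out : Q → Bool) (e : ℕ → Multiset Q) (b : Bool) : Prop :=
  ∃ n : ℕ, ∀ i ≥ n, Consensus out (e i) b

variable {A : Type*} [Fintype A]

/-- The initial configuration determined by input `X`. -/
def init (P : Protocol Q A) (X : Multiset A) : Multiset Q := X.map P.inp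

/-- A protocol is silent if every fair execution from every configuration is silent. -/
def IsSilentProtocol (P : Protocol Q A) : Prop :=
  ∀ e : ℕ → Multiset Q, IsExec P.T e → Fair P.T e → SilentExec e

/-- A protocol is well-specified if for every input every fair execution from the
corresponding initial configuration stabilizes to a common boolean value. -/
def WellSpecified (P : Protocol Q A) : Prop :=
  ∀ X : Multiset A, 2 ≤ Multiset.card X → ∃ b : Bool,
    ∀ e : ℕ → Multiset Q, e 0 = init P X → (∀ i, Step P.T (e i) (e (i + 1))) →
      Fair P.T e → Stabilizes P.out e b

/-- A protocol computes the predicate `φ`. -/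
def Computes (P : Protocol Q A) (φ : Multiset A → Bool) : Prop :=
  ∀ X : Multiset A, 2 ≤ Multiset.card X →
    ∀ e : ℕ → Multiset Q, e 0 = init P X → (∀ i, Step P.T (e i) (e (i + 1))) →
      Fair P.T e → Stabilizes P.out e (φ X)

/-- Termination: from every configuration some terminal configuration is reachable. -/
def Termination (P : Protocol Q A) : Prop :=
  ∀ C : Multiset Q, 2 ≤ Multiset.card C →
    ∃ C' : Multiset Q, Reach P.T C C' ∧ Terminal P.T C'

/-- NoSplitTerminal: all terminal configurations reachable from an initial configuration
are consensus configurations with one common output. -/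
def NoSplitTerminal (P : Protocol Q A) : Prop :=
  ∀ X : Multiset A, 2 ≤ Multiset.card X → ∃ b : Bool,
    ∀ C' : Multiset Q, Reach P.T (init P X) C' → Terminal P.T C' →
      Consensus P.out C' b

/-- All transitions of the form `(p, q) ↦ (p, q)`. -/
def silents (Q : Type*) [Fintype Q] [DecidableEq Q] : Finset (PTrans Q) :=
  Finset.univ.image fun pq : Q × Q => (pq.1, pq.2, pq.1, pq.2)

/-- The transition set of the induced protocol `P[S]`. -/
def induced (S : Finset (PTrans Q)) : Finset (PTrans Q) := S ∪ silents Q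

/-- `(Ts 0, …, Ts (n-1))` is an ordered partition witnessing LayeredTermination. -/
def LayeredWitness (P : Protocol Q A) (n : ℕ) (Ts : Fin n → Finset (PTrans Q)) : Prop :=
  (∀ i, (Ts i).Nonempty) ∧
  (∀ i j, i ≠ j → Disjoint (Ts i) (Ts j)) ∧
  Finset.univ.biUnion Ts = P.T ∧
  ∀ i : Fin n,
    (∀ e : ℕ → Multiset Q, IsExec (induced (Ts i)) e → SilentExec e) ∧
    (∀ C C' : Multiset Q, 2 ≤ Multiset.card C →
      Reach (induced (Ts i)) C C' →
      Terminal (induced ((Finset.univ.filter fun j => j < i).biUnion Ts)) C →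
      Terminal (induced ((Finset.univ.filter fun j => j < i).biUnion Ts)) C')

/-- LayeredTermination. -/
def LayeredTermination (P : Protocol Q A) : Prop :=
  ∃ (n : ℕ) (Ts : Fin n → Finset (PTrans Q)), LayeredWitness P n Ts

/-- `•R`, relative to the transition set `T`. -/
def preSetOf (T : Finset (PTrans Q)) (R : Finset Q) : Finset (PTrans Q) :=
  T.filter fun t => ∃ q ∈ R, q ∈ post t

/-- `R•`, relative to the transition set `T`. -/
def postSetOf (T : Finset (PTrans Q)) (R : Finset Q) : Finset (PTrans Q) :=
  T.filter fun t => ∃ q ∈ R, q ∈ pre t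

/-- `R` is a `U`-trap: `R• ∩ U ⊆ •R`. -/
def IsTrap (T U : Finset (PTrans Q)) (R : Finset Q) : Prop :=
  postSetOf T R ∩ U ⊆ preSetOf T R

/-- `R` is a `U`-siphon: `•R ∩ U ⊆ R•`. -/
def IsSiphon (T U : Finset (PTrans Q)) (R : Finset Q) : Prop :=
  preSetOf T R ∩ U ⊆ postSetOf T R

/-- The flow equations for `(C, C', x)`. -/
def FlowEq (T : Finset (PTrans Q)) (C C' : Multiset Q) (x : PTrans Q → ℕ) : Prop :=
  ∀ q : Q, (C'.count q : ℤ) =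
    (C.count q : ℤ) + ∑ t ∈ T, (x t : ℤ) * (((post t).count q : ℤ) - ((pre t).count q : ℤ))

/-- The support of `x` within `T`. -/
def suppIn (T : Finset (PTrans Q)) (x : PTrans Q → ℕ) : Finset (PTrans Q) :=
  T.filter fun t => x t ≠ 0

/-- Potential reachability `C ⇒ₓ C'` (flow equations plus trap and siphon constraints,
with `U = supp x`). -/
def PotReach (T : Finset (PTrans Q)) (C C' : Multiset Q) (x : PTrans Q → ℕ) : Prop :=
  FlowEq T C C' x ∧
  (∀ R : Finset Q, IsTrap T (suppIn T x) R → (∀ q ∈ R, q ∉ C') →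
    preSetOf T R ∩ suppIn T x = ∅) ∧
  (∀ R : Finset Q, IsSiphon T (suppIn T x) R → (∀ q ∈ R, q ∉ C) →
    postSetOf T R ∩ suppIn T x = ∅)

/-- StrongConsensus: all terminal configurations potentially reachable from an initial
configuration are consensus configurations with one common output. -/
def StrongConsensus (P : Protocol Q A) : Prop :=
  ∀ X : Multiset A, 2 ≤ Multiset.card X → ∃ b : Bool,
    ∀ (C' : Multiset Q) (x : PTrans Q → ℕ),
      PotReach P.T (init P X) C' x → Terminal P.T C' → Consensus P.out C' b

/-- `C` is `U`-dead: no transition of `U` can change `C`. -/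
def UDeadConf (U : Finset (PTrans Q)) (C : Multiset Q) : Prop :=
  ∀ t ∈ U, ∀ C' : Multiset Q, StepBy t C C' → C' = C

/-- The protocol with transitions `T` is `U`-dead: from every `U`-dead configuration,
every reachable configuration is `U`-dead. -/
def UDead (T U : Finset (PTrans Q)) : Prop :=
  ∀ C₀ : Multiset Q, 2 ≤ Multiset.card C₀ → UDeadConf U C₀ →
    ∀ C : Multiset Q, Reach T C₀ C → UDeadConf U C

end PopProt

/-! If every configuration reaches a terminal one, a fair execution, which takes only finitely
many values, visits some configuration infinitely often, hence by fairness every configuration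
reachable from it, in particular a terminal one, where it then stays. Conversely, pick a
configuration `D` reachable from `C` in a bottom strongly connected component of the (finite)
reachability graph and run forever around a closed walk from `D` through all its edges: this
execution is fair, so if the protocol is silent it settles in a configuration that fairness forces
to be terminal. For silent protocols the limits of fair executions from `I(X)` are thus exactly the
terminal configurations reachable from `I(X)`, and well-specification is NoSplitTerminal.
-/

section FairSequences

open Relation

variable {α : Type*} {r : α → α → Prop}

/-- `PopProt.Fair T e` is `FairSeq (Step T) e` by definition. -/
def FairSeq (r : α → α → Prop) (e : ℕ → α) : Prop :=
  ∀ x y, r x y → {i | e i = x}.Infinite → {j | e j = x ∧ e (j + 1) = y}.Infinite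

theorem reflTransGen_of_forall_rel_succ {e : ℕ → α} (he : ∀ i, r (e i) (e (i + 1)))
    {i j : ℕ} (hij : i ≤ j) : ReflTransGen r (e i) (e j) :=
  Nat.rel_of_forall_rel_succ_of_le (ReflTransGen r) (fun n => .single (he n)) hij

theorem FairSeq.infinite_of_reflTransGen {e : ℕ → α} (he : FairSeq r e) {x y : α}
    (hxy : ReflTransGen r x y) (hx : {i | e i = x}.Infinite) : {i | e i = y}.Infinite := by
  induction hxy with
  | refl => exact hx
  | tail _ hyz ih =>
    refine (((he _ _ hyz ih).image (add_left_injective 1).injOn)).mono ?_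
    rintro _ ⟨j, ⟨-, hj⟩, rfl⟩
    exact hj

theorem FairSeq.eq_of_rel_of_eventually_const {e : ℕ → α} (he : FairSeq r e) {m : ℕ}
    (hm : ∀ i ≥ m, e i = e m) {y : α} (hy : r (e m) y) : y = e m := by
  obtain ⟨j, ⟨-, hj⟩, hjm⟩ := (he _ _ hy ((Set.Ici_infinite m).mono hm)).exists_gt m
  rw [← hj, hm (j + 1) (by omega)]

theorem fairSeq_of_eventually_eq {e : ℕ → α} {x : α} {m : ℕ} (hm : ∀ i ≥ m, e i = x)
    (hx : ∀ y, r x y → y = x) : FairSeq r e := by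
  intro y z hyz hy
  obtain ⟨j, hj, hjm⟩ := hy.exists_gt m
  obtain rfl : y = x := hj ▸ hm j hjm.le
  rw [hx z hyz]
  exact (Set.Ici_infinite m).mono fun i hi => ⟨hm i hi, hm (i + 1) (Nat.le_succ_of_le hi)⟩

theorem exists_infinite_setOf_apply_eq {e : ℕ → α} (hfin : (Set.range e).Finite) :
    ∃ i, {j | e j = e i}.Infinite := by
  have := hfin.to_subtype
  obtain ⟨⟨_, i, rfl⟩, hfiber⟩ := Finite.exists_infinite_fiber (Set.rangeFactorization e)
  refine ⟨i, Set.infinite_coe_iff.mp hfiber |>.mono fun j hj => ?_⟩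
  exact congrArg Subtype.val (hj : Set.rangeFactorization e j = _)

theorem eventually_const_of_fairSeq {e : ℕ → α} (hstep : ∀ i, r (e i) (e (i + 1)))
    (he : FairSeq r e) (hfin : (Set.range e).Finite)
    (hstuck : ∀ i, ∃ y, ReflTransGen r (e i) y ∧ ∀ z, r y z → z = y) :
    ∃ n, ∀ i ≥ n, e i = e n := by
  obtain ⟨i, hi⟩ := exists_infinite_setOf_apply_eq hfin
  obtain ⟨y, hiy, hy⟩ := hstuck i
  obtain ⟨n, hn⟩ := (he.infinite_of_reflTransGen hiy hi).nonempty
  refine ⟨n, fun j hj => ?_⟩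
  induction j, hj using Nat.le_induction with
  | base => rfl
  | succ j _ ih =>
    have hj := hstep j
    rw [ih, hn] at hj
    rw [hn]
    exact hy _ hj

theorem exists_recurrent_of_finite {x : α} (hfin : {y | ReflTransGen r x y}.Finite) :
    ∃ d, ReflTransGen r x d ∧ ∀ y, ReflTransGen r d y → ReflTransGen r y d := by
  obtain ⟨d, hxd, hmin⟩ := Set.exists_min_image _ (fun d => {y | ReflTransGen r d y}.ncard) hfin
    ⟨x, .refl⟩
  refine ⟨d, hxd, fun y hdy => ?_⟩
  have hsub : {z | ReflTransGen r y z} ⊆ {z | ReflTransGen r d z} := fun z => hdy.trans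
  have hfin_d : {z | ReflTransGen r d z}.Finite := hfin.subset fun z => hxd.trans
  have := Set.eq_of_subset_of_ncard_le hsub (hmin y (hxd.trans hdy)) hfin_d
  exact (this ▸ ReflTransGen.refl : d ∈ {z | ReflTransGen r y z})

end FairSequences

section Walks

open Relation

variable {α : Type*} {r : α → α → Prop}

def IsWalk (r : α → α → Prop) (f : ℕ → α) (n : ℕ) : Prop :=
  ∀ i < n, r (f i) (f (i + 1))

def Traverses (f : ℕ → α) (n : ℕ) (x y : α) : Prop :=
  ∃ i < n, f i = x ∧ f (i + 1) = y

def walkAppend (f : ℕ → α) (n : ℕ) (g : ℕ → α) (i : ℕ) : α :=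
  if i ≤ n then f i else g (i - n)

theorem walkAppend_of_le {f g : ℕ → α} {n i : ℕ} (h : i ≤ n) : walkAppend f n g i = f i :=
  if_pos h

theorem walkAppend_add {f g : ℕ → α} {n : ℕ} (hfg : f n = g 0) (j : ℕ) :
    walkAppend f n g (n + j) = g j := by
  unfold walkAppend
  split_ifs with h
  · obtain rfl : j = 0 := by omega
    exact hfg
  · rw [Nat.add_sub_cancel_left]

theorem IsWalk.append {f g : ℕ → α} {n m : ℕ} (hf : IsWalk r f n) (hg : IsWalk r g m)
    (hfg : f n = g 0) : IsWalk r (walkAppend f n g) (n + m) := by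
  intro i hi
  rcases lt_or_ge i n with h | h
  · rw [walkAppend_of_le h.le, walkAppend_of_le h]
    exact hf i h
  · obtain ⟨j, rfl⟩ := Nat.exists_eq_add_of_le h
    rw [walkAppend_add hfg, add_assoc, walkAppend_add hfg]
    exact hg j (by omega)

theorem isWalk_edge {x y : α} (h : r x y) : IsWalk r (fun i => if i = 0 then x else y) 1 := by
  intro i hi
  obtain rfl : i = 0 := by omega
  exact h

theorem Traverses.append_left {f g : ℕ → α} {n m : ℕ} {x y : α} (h : Traverses f n x y) :
    Traverses (walkAppend f n g) (n + m) x y := by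
  obtain ⟨i, hi, hx, hy⟩ := h
  exact ⟨i, by omega, by rwa [walkAppend_of_le hi.le], by rwa [walkAppend_of_le hi]⟩

theorem Traverses.append_right {f g : ℕ → α} {n m : ℕ} {x y : α} (hfg : f n = g 0)
    (h : Traverses g m x y) : Traverses (walkAppend f n g) (n + m) x y := by
  obtain ⟨j, hj, hx, hy⟩ := h
  exact ⟨n + j, by omega, by rwa [walkAppend_add hfg], by rwa [add_assoc, walkAppend_add hfg]⟩

theorem exists_walk_of_reflTransGen {a b : α} (h : ReflTransGen r a b) :
    ∃ f n, f 0 = a ∧ f n = b ∧ IsWalk r f n := by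
  induction h with
  | refl => exact ⟨fun _ => a, 0, rfl, rfl, fun i hi => absurd hi i.not_lt_zero⟩
  | @tail b c _ hbc ih =>
    obtain ⟨f, n, hf0, hfn, hf⟩ := ih
    have hfg : f n = (fun i => if i = 0 then b else c) 0 := hfn
    exact ⟨_, n + 1, by rw [walkAppend_of_le n.zero_le, hf0], walkAppend_add hfg 1,
      hf.append (isWalk_edge hbc) hfg⟩

theorem exists_seq_of_reflTransGen {a b : α} (hab : ReflTransGen r a b) (hb : r b b) :
    ∃ e : ℕ → α, e 0 = a ∧ (∀ i, r (e i) (e (i + 1))) ∧ ∃ m, ∀ i ≥ m, e i = b := by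
  obtain ⟨f, n, hf0, hfn, hf⟩ := exists_walk_of_reflTransGen hab
  refine ⟨fun i => f (min i n), by simpa using hf0, fun i => ?_, n, fun i hi => ?_⟩
  · dsimp only
    rcases lt_or_ge i n with h | h
    · rw [min_eq_left h.le, min_eq_left h]
      exact hf i h
    · rw [min_eq_right h, min_eq_right (Nat.le_succ_of_le h), hfn]
      exact hb
  · simp only [min_eq_right hi, hfn]

theorem exists_closed_walk_traversing {d x y : α} (hdx : ReflTransGen r d x) (hxy : r x y)
    (hyd : ReflTransGen r y d) :
    ∃ f n, f 0 = d ∧ f n = d ∧ IsWalk r f n ∧ Traverses f n x y := by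
  obtain ⟨g, m, hg0, hgm, hg⟩ := exists_walk_of_reflTransGen hdx
  obtain ⟨h, k, hh0, hhk, hh⟩ := exists_walk_of_reflTransGen hyd
  set edge : ℕ → α := fun i => if i = 0 then x else y
  have hge : g m = edge 0 := hgm
  have heh : walkAppend g m edge (m + 1) = h 0 := by rw [walkAppend_add hge]; exact hh0.symm
  refine ⟨walkAppend (walkAppend g m edge) (m + 1) h, m + 1 + k, ?_, ?_, ?_, ?_⟩
  · rw [walkAppend_of_le (Nat.zero_le _), walkAppend_of_le (Nat.zero_le _), hg0]
  · rw [walkAppend_add heh, hhk]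
  · exact (hg.append (isWalk_edge hxy) hge).append hh heh
  · exact Traverses.append_left (Traverses.append_right hge ⟨0, one_pos, rfl, rfl⟩)

theorem exists_closed_walk_traversing_all {d : α}
    (hrec : ∀ y, ReflTransGen r d y → ReflTransGen r y d) :
    ∀ L : List (α × α), (∀ p ∈ L, ReflTransGen r d p.1 ∧ r p.1 p.2) →
      ∃ f n, f 0 = d ∧ f n = d ∧ IsWalk r f n ∧ ∀ p ∈ L, Traverses f n p.1 p.2
  | [], _ => ⟨fun _ => d, 0, rfl, rfl, fun i hi => absurd hi i.not_lt_zero, by simp⟩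
  | (x, y) :: L, hL => by
    obtain ⟨hdx, hxy⟩ := hL (x, y) List.mem_cons_self
    obtain ⟨f, n, hf0, hfn, hf, hfL⟩ :=
      exists_closed_walk_traversing_all hrec L fun p hp => hL p (List.mem_cons_of_mem _ hp)
    obtain ⟨g, m, hg0, hgm, hg, hgxy⟩ :=
      exists_closed_walk_traversing hdx hxy (hrec y (hdx.tail hxy))
    have hfg : f n = g 0 := hfn.trans hg0.symm
    refine ⟨walkAppend f n g, n + m, by rw [walkAppend_of_le n.zero_le, hf0],
      by rw [walkAppend_add hfg, hgm], hf.append hg hfg, ?_⟩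
    rintro p (_ | ⟨_, hp⟩)
    · exact hgxy.append_right hfg
    · exact (hfL p hp).append_left

theorem apply_add_one_mod {f : ℕ → α} {n : ℕ} (hn : 0 < n) (hcl : f n = f 0) (i : ℕ) :
    f ((i + 1) % n) = f (i % n + 1) := by
  have hsplit : (i + 1) % n = (i % n + 1) % n := by
    conv_lhs => rw [← Nat.mod_add_div i n, add_right_comm, Nat.add_mul_mod_self_left]
  rcases Nat.lt_or_eq_of_le (Nat.mod_lt i hn) with h | h
  · rw [hsplit, Nat.mod_eq_of_lt h]
  · rw [hsplit, ← Nat.succ_eq_add_one, h, Nat.mod_self, hcl]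

theorem IsWalk.rel_mod {f : ℕ → α} {n : ℕ} (hf : IsWalk r f n) (hn : 0 < n) (hcl : f n = f 0)
    (i : ℕ) : r (f (i % n)) (f ((i + 1) % n)) := by
  rw [apply_add_one_mod hn hcl]
  exact hf _ (Nat.mod_lt i hn)

theorem Traverses.infinite_mod {f : ℕ → α} {n : ℕ} {x y : α} (h : Traverses f n x y)
    (hcl : f n = f 0) : {j | f (j % n) = x ∧ f ((j + 1) % n) = y}.Infinite := by
  obtain ⟨k, hk, hx, hy⟩ := h
  refine (Nat.frequently_atTop_iff_infinite.mp (Nat.frequently_mod_eq hk)).mono fun j hj => ?_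
  have hj : j % n = k := hj
  exact ⟨hj ▸ hx, by rw [apply_add_one_mod (by omega) hcl, hj, hy]⟩

/-- Walking periodically around a closed walk that traverses every edge reachable from `d`
gives a fair sequence. -/
theorem exists_fairSeq_of_recurrent {d : α} (hfin : {y | ReflTransGen r d y}.Finite)
    (hrec : ∀ y, ReflTransGen r d y → ReflTransGen r y d) (hd : ∃ z, r d z) :
    ∃ e : ℕ → α, e 0 = d ∧ (∀ i, r (e i) (e (i + 1))) ∧ FairSeq r e := by
  have hE : {p : α × α | ReflTransGen r d p.1 ∧ r p.1 p.2}.Finite :=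
    (hfin.prod hfin).subset fun p hp => ⟨hp.1, hp.1.tail hp.2⟩
  obtain ⟨f, n, hf0, hfn, hf, htrav⟩ :=
    exists_closed_walk_traversing_all hrec hE.toFinset.toList fun p hp => by simpa using hp
  have htrav' : ∀ x y, ReflTransGen r d x → r x y → Traverses f n x y :=
    fun x y hx hxy => htrav (x, y) (by simpa using ⟨hx, hxy⟩)
  obtain ⟨z, hz⟩ := hd
  have hn : 0 < n := by
    obtain ⟨i, hi, -⟩ := htrav' d z .refl hz
    omega
  have hcl : f n = f 0 := hfn.trans hf0.symm
  refine ⟨fun i => f (i % n), by simpa using hf0, hf.rel_mod hn hcl, ?_⟩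
  intro x y hxy hx
  obtain ⟨j, hj : f (j % n) = x⟩ := hx.nonempty
  have hdx : ReflTransGen r d x := by
    have := reflTransGen_of_forall_rel_succ (e := fun i => f (i % n)) (hf.rel_mod hn hcl) j.zero_le
    rwa [Nat.zero_mod, hf0, hj] at this
  exact (htrav' x y hdx hxy).infinite_mod hcl

end Walks

namespace PopProt

variable {Q : Type*} [DecidableEq Q]

theorem StepBy.card_eq {t : PTrans Q} {C C' : Multiset Q} (h : StepBy t C C') :
    Multiset.card C' = Multiset.card C := by
  obtain ⟨hle, rfl⟩ := h
  have hpp : Multiset.card (pre t) = Multiset.card (post t) := by simp [pre, post]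
  rw [Multiset.card_add, Multiset.card_sub hle, ← hpp,
    Nat.sub_add_cancel (Multiset.card_le_card hle)]

theorem Reach.card_eq {T : Finset (PTrans Q)} {C C' : Multiset Q} (h : Reach T C C') :
    Multiset.card C' = Multiset.card C := by
  induction h with
  | refl => rfl
  | tail _ hstep ih =>
    obtain ⟨t, -, ht⟩ := hstep
    exact ht.card_eq.trans ih

theorem terminal_iff_forall_step_eq {T : Finset (PTrans Q)} {C : Multiset Q} :
    Terminal T C ↔ ∀ C', Step T C C' → C' = C := by
  constructor
  · rintro hC C' ⟨t, ht, hle, rfl⟩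
    rw [← hC t ht hle, tsub_add_cancel_of_le hle]
  · intro hC t ht hle
    have h := hC _ ⟨t, ht, hle, rfl⟩
    exact (add_left_cancel (h.trans (tsub_add_cancel_of_le hle).symm)).symm

theorem terminal_of_fair_of_eventually_const {T : Finset (PTrans Q)} {e : ℕ → Multiset Q}
    (hfair : Fair T e) {m : ℕ} (hm : ∀ i ≥ m, e i = e m) : Terminal T (e m) :=
  terminal_iff_forall_step_eq.mpr fun _ => FairSeq.eq_of_rel_of_eventually_const hfair hm

variable [Fintype Q] {A : Type*} [Fintype A]

theorem finite_setOf_reach (T : Finset (PTrans Q)) (C : Multiset Q) :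
    {C' | Reach T C C'}.Finite :=
  (Set.finite_range fun s : Sym Q (Multiset.card C) => (s : Multiset Q)).subset
    fun C' h => ⟨⟨C', Reach.card_eq h⟩, rfl⟩

theorem card_init (P : Protocol Q A) (X : Multiset A) :
    Multiset.card (init P X) = Multiset.card X :=
  Multiset.card_map _ _

theorem exists_step (P : Protocol Q A) {C : Multiset Q} (hC : 2 ≤ Multiset.card C) :
    ∃ C', Step P.T C C' := by
  have hpos : 0 < Multiset.card (Multiset.powersetCard 2 C) := by
    rw [Multiset.card_powersetCard]
    exact Nat.choose_pos hC
  obtain ⟨D, hD⟩ := Multiset.card_pos_iff_exists_mem.mp hpos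
  obtain ⟨hDC, hD2⟩ := Multiset.mem_powersetCard.mp hD
  obtain ⟨p, q, rfl⟩ := Multiset.card_eq_two.mp hD2
  obtain ⟨p', q', ht⟩ := P.total p q
  exact ⟨_, _, ht, hDC, rfl⟩

theorem Terminal.step_self {P : Protocol Q A} {C : Multiset Q} (hterm : Terminal P.T C)
    (hC : 2 ≤ Multiset.card C) : Step P.T C C := by
  obtain ⟨C', hC'⟩ := exists_step P hC
  exact terminal_iff_forall_step_eq.mp hterm C' hC' ▸ hC'

theorem termination_of_isSilentProtocol {P : Protocol Q A} (h : IsSilentProtocol P) :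
    Termination P := by
  intro C hC
  obtain ⟨D, hCD, hD⟩ := exists_recurrent_of_finite (finite_setOf_reach P.T C)
  have hD2 : 2 ≤ Multiset.card D := Reach.card_eq hCD ▸ hC
  obtain ⟨e, rfl, hstep, hfair⟩ :=
    exists_fairSeq_of_recurrent (finite_setOf_reach P.T _) hD (exists_step P hD2)
  obtain ⟨m, hm⟩ := h e ⟨hD2, hstep⟩ hfair
  exact ⟨e m, hCD.trans (reflTransGen_of_forall_rel_succ hstep m.zero_le),
    terminal_of_fair_of_eventually_const hfair hm⟩

theorem isSilentProtocol_of_termination {P : Protocol Q A} (h : Termination P) :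
    IsSilentProtocol P := by
  rintro e ⟨he0, hstep⟩ hfair
  have hreach : ∀ i, Reach P.T (e 0) (e i) := fun i =>
    reflTransGen_of_forall_rel_succ hstep i.zero_le
  refine eventually_const_of_fairSeq hstep hfair
    ((finite_setOf_reach P.T (e 0)).subset (Set.range_subset_iff.mpr hreach)) fun i => ?_
  obtain ⟨D, hD, hterm⟩ := h (e i) (Reach.card_eq (hreach i) ▸ he0)
  exact ⟨D, hD, terminal_iff_forall_step_eq.mp hterm⟩

theorem isSilentProtocol_iff_termination (P : Protocol Q A) :
    IsSilentProtocol P ↔ Termination P :=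
  ⟨termination_of_isSilentProtocol, isSilentProtocol_of_termination⟩

theorem noSplitTerminal_of_wellSpecified {P : Protocol Q A} (h : WellSpecified P) :
    NoSplitTerminal P := by
  intro X hX
  obtain ⟨b, hb⟩ := h X hX
  refine ⟨b, fun C hreach hterm => ?_⟩
  have hC : 2 ≤ Multiset.card C := by rwa [Reach.card_eq hreach, card_init]
  obtain ⟨e, he0, hstep, m, hm⟩ := exists_seq_of_reflTransGen hreach (hterm.step_self hC)
  obtain ⟨n, hn⟩ :=
    hb e he0 hstep (fairSeq_of_eventually_eq hm (terminal_iff_forall_step_eq.mp hterm))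
  simpa only [hm (max m n) (le_max_left m n)] using hn (max m n) (le_max_right m n)

theorem wellSpecified_of_noSplitTerminal {P : Protocol Q A} (hsil : IsSilentProtocol P)
    (h : NoSplitTerminal P) : WellSpecified P := by
  intro X hX
  obtain ⟨b, hb⟩ := h X hX
  refine ⟨b, fun e he0 hstep hfair => ?_⟩
  obtain ⟨m, hm⟩ := hsil e ⟨by rwa [he0, card_init], hstep⟩ hfair
  have hreach : Reach P.T (init P X) (e m) :=
    he0 ▸ reflTransGen_of_forall_rel_succ hstep m.zero_le
  exact ⟨m, fun i hi => hm i hi ▸ hb (e m) hreach (terminal_of_fair_of_eventually_const hfair hm)⟩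

end PopProt

open PopProt in
theorem silent_wellSpecified_iff_termination_noSplitTerminal_general
    {Q A : Type*} [Fintype Q] [DecidableEq Q] [Fintype A]
    (P : Protocol Q A) :
    ((IsSilentProtocol P ∧ WellSpecified P) ↔ (Termination P ∧ NoSplitTerminal P)) ∧
    (IsSilentProtocol P ↔ Termination P) ∧
    (IsSilentProtocol P → (WellSpecified P ↔ NoSplitTerminal P)) := by
  have hsilent := isSilentProtocol_iff_termination P
  have hws (hsil : IsSilentProtocol P) : WellSpecified P ↔ NoSplitTerminal P :=
    ⟨noSplitTerminal_of_wellSpecified, wellSpecified_of_noSplitTerminal hsil⟩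
  refine ⟨⟨?_, ?_⟩, hsilent, hws⟩
  · rintro ⟨hsil, hw⟩
    exact ⟨hsilent.mp hsil, (hws hsil).mp hw⟩
  · rintro ⟨ht, hn⟩
    have hsil := hsilent.mpr ht
    exact ⟨hsil, (hws hsil).mpr hn⟩

open PopProt in
/-- Proposition: a population protocol is well-specified and silent iff it satisfies
Termination and NoSplitTerminal; (a) it is silent iff it satisfies Termination, and
(b) if it is silent, it is well-specified iff it satisfies NoSplitTerminal. -/
theorem silent_wellSpecified_iff_termination_noSplitTerminal
    {Q A : Type*} [Fintype Q] [DecidableEq Q] [Nonempty Q] [Fintype A] [Nonempty A]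
    (P : Protocol Q A) :
    ((IsSilentProtocol P ∧ WellSpecified P) ↔ (Termination P ∧ NoSplitTerminal P)) ∧
    (IsSilentProtocol P ↔ Termination P) ∧
    (IsSilentProtocol P → (WellSpecified P ↔ NoSplitTerminal P)) :=
  silent_wellSpecified_iff_termination_noSplitTerminal_general P
end

section
/- Every population protocol satisfying LayeredTermination satisfies Termination, i.e., if there is an ordered partition (T₁,…,Tₙ) of T satisfying conditions (a) and (b) of LayeredTermination, then from every configuration C some terminal configuration C' is reachable. -/
section Aux
open PopProt
variable {Q : Type*} [Fintype Q] [DecidableEq Q]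

lemma card_pre (t : PTrans Q) : Multiset.card (pre t) = 2 := rfl

lemma card_post (t : PTrans Q) : Multiset.card (post t) = 2 := rfl

lemma stepBy_card {t : PTrans Q} {C C' : Multiset Q} (h : StepBy t C C') :
    Multiset.card C' = Multiset.card C := by
  obtain ⟨hle, heq⟩ := h
  have h2 : (2 : ℕ) ≤ Multiset.card C := by
    have := Multiset.card_le_card hle
    simpa [card_pre] using this
  subst heq
  rw [Multiset.card_add, Multiset.card_sub hle, card_pre, card_post]
  omega

lemma step_card {T : Finset (PTrans Q)} {C C' : Multiset Q} (h : Step T C C') :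
    Multiset.card C' = Multiset.card C := by
  obtain ⟨t, _, hs⟩ := h
  exact stepBy_card hs

lemma reach_card {T : Finset (PTrans Q)} {C C' : Multiset Q} (h : Reach T C C') :
    Multiset.card C' = Multiset.card C := by
  induction h with
  | refl => rfl
  | tail _ hs ih => rw [step_card hs, ih]

lemma stepBy_ne {t : PTrans Q} {C C' : Multiset Q} (h : StepBy t C C')
    (hns : ¬ SilentT t) : C' ≠ C := by
  obtain ⟨hle, heq⟩ := h
  subst heq
  intro hcontra
  apply hns
  have h1 : C - pre t + pre t = C := tsub_add_cancel_of_le hle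
  have : C - pre t + post t = C - pre t + pre t := by rw [hcontra, h1]
  exact ((add_right_inj _).mp this).symm

lemma silents_silent {t : PTrans Q} (h : t ∈ silents Q) : SilentT t := by
  simp only [silents, Finset.mem_image, Finset.mem_univ, true_and] at h
  obtain ⟨⟨p, q⟩, rfl⟩ := h
  rfl

lemma terminal_induced_iff {S : Finset (PTrans Q)} {C : Multiset Q} :
    Terminal (induced S) C ↔ Terminal S C := by
  constructor
  · intro h t ht hle
    exact h t (Finset.mem_union_left _ ht) hle
  · intro h t ht hle
    rcases Finset.mem_union.mp ht with h1 | h2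
    · exact h t h1 hle
    · exact silents_silent h2

lemma reach_induced_mono {S T : Finset (PTrans Q)} (hST : S ⊆ T)
    {C C' : Multiset Q} (h : Reach (induced S) C C') : Reach T C C' := by
  induction h with
  | refl => exact Relation.ReflTransGen.refl
  | tail _ hs ih =>
    obtain ⟨t, ht, hle, heq⟩ := hs
    rcases Finset.mem_union.mp ht with h1 | h2
    · exact ih.tail ⟨t, hST h1, hle, heq⟩
    · have hsil : SilentT t := silents_silent h2
      have : _ = _ := heq
      rw [SilentT] at hsil
      rw [this, ← hsil, tsub_add_cancel_of_le hle]
      exact ih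

lemma exists_terminal_of_silent {S : Finset (PTrans Q)}
    (ha : ∀ e : ℕ → Multiset Q, IsExec (induced S) e → SilentExec e)
    (C : Multiset Q) (hC : 2 ≤ Multiset.card C) :
    ∃ C', Reach (induced S) C C' ∧ Terminal (induced S) C' := by
  by_contra hcon
  push_neg at hcon
  have hstep : ∀ D, Reach (induced S) C D →
      ∃ D', Step (induced S) D D' ∧ D' ≠ D := by
    intro D hD
    have hnt := hcon D hD
    unfold Terminal at hnt
    push_neg at hnt
    obtain ⟨t, ht, hle, hns⟩ := hnt
    refine ⟨D - pre t + post t, ⟨t, ht, hle, rfl⟩, stepBy_ne ⟨hle, rfl⟩ hns⟩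
  let f : {D // Reach (induced S) C D} → {D // Reach (induced S) C D} := fun D =>
    ⟨Classical.choose (hstep D.1 D.2),
      D.2.tail (Classical.choose_spec (hstep D.1 D.2)).1⟩
  let e : ℕ → {D // Reach (induced S) C D} :=
    fun n => f^[n] ⟨C, Relation.ReflTransGen.refl⟩
  have he_succ : ∀ n, e (n + 1) = f (e n) := by
    intro n
    simp only [e, Function.iterate_succ_apply']
  have hexec : IsExec (induced S) (fun n => (e n).1) := by
    constructor
    · simpa [e] using hC
    · intro i
      show Step (induced S) (e i).1 (e (i + 1)).1
      rw [he_succ i]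
      exact (Classical.choose_spec (hstep (e i).1 (e i).2)).1
  obtain ⟨m, hm⟩ := ha _ hexec
  have h1 : (e (m + 1)).1 = (e m).1 := hm (m + 1) (Nat.le_succ m)
  have h2 : (e (m + 1)).1 ≠ (e m).1 := by
    rw [he_succ]
    exact (Classical.choose_spec (hstep (e m).1 (e m).2)).2
  exact h2 h1

end Aux

open PopProt in
/-- Proposition: LayeredTermination implies Termination. -/
theorem layeredTermination_implies_termination
    {Q A : Type*} [Fintype Q] [DecidableEq Q] [Nonempty Q] [Fintype A] [Nonempty A]
    (P : Protocol Q A) (h : LayeredTermination P) :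
    Termination P := by
  obtain ⟨n, Ts, hne, hdisj, hunion, hlayers⟩ := h
  intro C hC
  have hTs_sub : ∀ i : Fin n, Ts i ⊆ P.T := by
    intro i t ht
    rw [← hunion]
    exact Finset.mem_biUnion.mpr ⟨i, Finset.mem_univ i, ht⟩
  have key : ∀ k ≤ n, ∃ C', Reach P.T C C' ∧ 2 ≤ Multiset.card C' ∧
      Terminal ((Finset.univ.filter fun j : Fin n => (j : ℕ) < k).biUnion Ts) C' := by
    intro k
    induction k with
    | zero =>
      intro _
      refine ⟨C, Relation.ReflTransGen.refl, hC, ?_⟩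
      intro t ht _
      simp at ht
    | succ k ih =>
      intro hk
      obtain ⟨C', h1, h2, h3⟩ := ih (Nat.le_of_succ_le hk)
      have hkn : k < n := hk
      set i : Fin n := ⟨k, hkn⟩ with hi
      obtain ⟨ha, hb⟩ := hlayers i
      obtain ⟨C'', hr, hterm⟩ := exists_terminal_of_silent ha C' h2
      have hfil : (Finset.univ.filter fun j : Fin n => j < i) =
          (Finset.univ.filter fun j : Fin n => (j : ℕ) < k) := by
        apply Finset.filter_congr
        intro j _
        simp [Fin.lt_def, hi]
      have hC'term : Terminal (induced
          ((Finset.univ.filter fun j : Fin n => j < i).biUnion Ts)) C' := by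
        rw [terminal_induced_iff, hfil]
        exact h3
      have hC''prev := hb C' C'' h2 hr hC'term
      rw [terminal_induced_iff, hfil] at hC''prev
      refine ⟨C'', h1.trans (reach_induced_mono (hTs_sub i) hr), ?_, ?_⟩
      · rw [reach_card (reach_induced_mono (hTs_sub i) hr)]
        exact h2
      · intro t ht hle
        obtain ⟨j, hj, htj⟩ := Finset.mem_biUnion.mp ht
        rw [Finset.mem_filter] at hj
        rcases Nat.lt_succ_iff_lt_or_eq.mp hj.2 with hlt | heq
        · exact hC''prev t (Finset.mem_biUnion.mpr
            ⟨j, Finset.mem_filter.mpr ⟨Finset.mem_univ j, hlt⟩, htj⟩) hle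
        · have hji : j = i := Fin.ext heq
          subst hji
          exact hterm t (Finset.mem_union_left _ htj) hle
  obtain ⟨C', h1, _, h3⟩ := key n le_rfl
  refine ⟨C', h1, ?_⟩
  intro t ht hle
  apply h3 t _ hle
  rw [← hunion] at ht
  obtain ⟨j, _, htj⟩ := Finset.mem_biUnion.mp ht
  exact Finset.mem_biUnion.mpr ⟨j, by simp [j.isLt], htj⟩
end

section
/- Let P = (Q, T, Σ, I, O) be a population protocol and let U be the set of non-silent transitions of T. Then P has a non-silent execution (from some configuration) if and only if there exists x : U → ℚ such that Σ_{t ∈ U} x(t)·(post(t)(q) − pre(t)(q)) = 0 for every q ∈ Q, x(t) ≥ 0 for every t ∈ U, and x(t) > 0 for some t ∈ U. -/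
/-!
A non-silent execution lives among the finitely many configurations of its size, so some
configuration recurs around a non-silent step; the transitions fired in between form a multiset
whose pres and posts add up to the same configuration, and its counts solve the flow equations.
Conversely, clearing denominators turns a rational solution into such a balanced multiset, and
firing it from the sum of its pres returns to the start, so repeating it forever
gives a non-silent execution.
-/

theorem Multiset.sum_map_eq_sum_count_nsmul {α M : Type*} [DecidableEq α] [AddCommMonoid M]
    {m : Multiset α} {U : Finset α} (hm : m.toFinset ⊆ U) (g : α → M) :
    (m.map g).sum = ∑ a ∈ U, m.count a • g a := by
  rw [Finset.sum_multiset_map_count]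
  exact Finset.sum_subset hm fun a _ ha => by
    rw [Multiset.count_eq_zero.2 (by simpa using ha), zero_smul]

theorem Multiset.count_sum_replicate_of_mem {α : Type*} [DecidableEq α] (U : Finset α)
    (n : α → ℕ) {a : α} (ha : a ∈ U) : (∑ b ∈ U, Multiset.replicate (n b) b).count a = n a := by
  simp [Multiset.count_sum', Multiset.count_replicate, ha]

theorem Multiset.toFinset_sum_replicate_subset {α : Type*} [DecidableEq α] (U : Finset α)
    (n : α → ℕ) : (∑ b ∈ U, Multiset.replicate (n b) b).toFinset ⊆ U := by
  intro a ha
  obtain ⟨b, hb, hab⟩ := Multiset.mem_sum.1 (Multiset.mem_toFinset.1 ha)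
  rwa [Multiset.eq_of_mem_replicate hab]

theorem Finset.exists_pos_nat_mul_eq_natCast {α : Type*} (U : Finset α) (x : α → ℚ)
    (hx : ∀ a ∈ U, 0 ≤ x a) : ∃ (d : ℕ) (n : α → ℕ), 0 < d ∧ ∀ a ∈ U, (n a : ℚ) = d * x a := by
  refine ⟨∏ a ∈ U, (x a).den, fun a => (∏ b ∈ U, (x b).den) / (x a).den * (x a).num.toNat,
    Finset.prod_pos fun a _ => (x a).den_pos, fun a ha => ?_⟩
  obtain ⟨c, hc⟩ : (x a).den ∣ ∏ b ∈ U, (x b).den := Finset.dvd_prod_of_mem _ ha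
  dsimp only
  rw [hc, Nat.mul_div_cancel_left _ (x a).den_pos, Nat.cast_mul, Nat.cast_mul,
    ← Int.cast_natCast (x a).num.toNat, Int.toNat_of_nonneg (Rat.num_nonneg.2 (hx a ha)),
    ← Rat.mul_den_eq_num]
  ring

namespace PopProt

section

variable {Q : Type*}

theorem card_pre (t : PTrans Q) : Multiset.card (pre t) = 2 := rfl

theorem card_post (t : PTrans Q) : Multiset.card (post t) = 2 := rfl

theorem not_silentExec_iff {e : ℕ → Multiset Q} :
    ¬ SilentExec e ↔ ∀ N, ∃ i ≥ N, e (i + 1) ≠ e i := by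
  refine ⟨fun hns N => ?_, fun hchg ⟨n, hn⟩ => ?_⟩
  · by_contra! hconst
    refine hns ⟨N, fun i hi => ?_⟩
    induction i, hi using Nat.le_induction with
    | base => rfl
    | succ i hi ih => rw [hconst i hi, ih]
  · obtain ⟨i, hi, hne⟩ := hchg n
    exact hne ((hn (i + 1) (by omega)).trans (hn i hi).symm)

def Balanced (m : Multiset (PTrans Q)) : Prop :=
  (m.map pre).sum = (m.map post).sum

/-- Firing `L` from `(L.map pre).sum` never gets stuck: after `r` steps the first `r`
transitions have deposited their posts and the others still find their pres. -/
def cycleConf (L : List (PTrans Q)) (r : ℕ) : Multiset Q :=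
  ((L.take r).map post).sum + ((L.drop r).map pre).sum

theorem cycleConf_succ_mod {L : List (PTrans Q)} (hL : (L.map pre).sum = (L.map post).sum)
    {r : ℕ} (hr : r < L.length) : cycleConf L ((r + 1) % L.length) = cycleConf L (r + 1) := by
  rcases (Nat.succ_le_of_lt hr).eq_or_lt with h | h
  · rw [show r + 1 = L.length from h, Nat.mod_self]
    simp [cycleConf, hL]
  · rw [Nat.mod_eq_of_lt h]

end

variable {Q : Type*} [DecidableEq Q]

theorem stepBy_pre_add (t : PTrans Q) (C : Multiset Q) : StepBy t (pre t + C) (post t + C) :=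
  ⟨Multiset.le_add_right _ _, by rw [add_tsub_cancel_left, add_comm]⟩

namespace StepBy

variable {t : PTrans Q} {C C' : Multiset Q}

theorem add_pre (h : StepBy t C C') : C' + pre t = C + post t := by
  rw [h.2, add_right_comm, tsub_add_cancel_of_le h.1]

theorem card_eq_s2 (h : StepBy t C C') : Multiset.card C' = Multiset.card C := by
  simpa [card_pre, card_post] using congrArg Multiset.card h.add_pre

theorem two_le_card (h : StepBy t C C') : 2 ≤ Multiset.card C :=
  card_pre t ▸ Multiset.card_le_card h.1

theorem eq_iff_silentT (h : StepBy t C C') : C' = C ↔ SilentT t := by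
  refine ⟨fun hC => add_left_cancel (hC ▸ h.add_pre), fun hs => ?_⟩
  rw [h.2, ← hs, tsub_add_cancel_of_le h.1]

end StepBy

theorem IsExec.card_eq_s2 {T : Finset (PTrans Q)} {e : ℕ → Multiset Q} (he : IsExec T e) (i : ℕ) :
    Multiset.card (e i) = Multiset.card (e 0) := by
  induction i with
  | zero => rfl
  | succ i ih =>
    obtain ⟨t, -, ht⟩ := he.2 i
    rw [ht.card_eq_s2, ih]

theorem IsExec.exists_infinite_setOf_eq [Fintype Q] {T : Finset (PTrans Q)}
    {e : ℕ → Multiset Q} (he : IsExec T e) : ∃ C, {i | e i = C}.Infinite := by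
  let g : ℕ → Sym Q (Multiset.card (e 0)) := fun i => ⟨e i, he.card_eq_s2 i⟩
  obtain ⟨C, hC⟩ := Finite.exists_infinite_fiber g
  exact ⟨C, (Set.infinite_coe_iff.1 hC).mono fun i (hi : g i = C) => congrArg Subtype.val hi⟩

theorem add_sum_pre_eq_add_sum_post {f : ℕ → PTrans Q} {e : ℕ → Multiset Q}
    (hf : ∀ i, StepBy (f i) (e i) (e (i + 1))) {i j : ℕ} (hij : i ≤ j) :
    e j + ∑ k ∈ Finset.Ico i j, pre (f k) = e i + ∑ k ∈ Finset.Ico i j, post (f k) := by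
  induction j, hij using Nat.le_induction with
  | base => simp
  | succ j hij ih =>
    rw [Finset.sum_Ico_succ_top hij, Finset.sum_Ico_succ_top hij]
    calc e (j + 1) + (∑ k ∈ Finset.Ico i j, pre (f k) + pre (f j))
        = e (j + 1) + pre (f j) + ∑ k ∈ Finset.Ico i j, pre (f k) := by abel
      _ = e j + ∑ k ∈ Finset.Ico i j, pre (f k) + post (f j) := by rw [(hf j).add_pre]; abel
      _ = e i + (∑ k ∈ Finset.Ico i j, post (f k) + post (f j)) := by rw [ih]; abel

theorem stepBy_cycleConf (L : List (PTrans Q)) {r : ℕ} (hr : r < L.length) :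
    StepBy L[r] (cycleConf L r) (cycleConf L (r + 1)) := by
  convert stepBy_pre_add L[r] (((L.take r).map post).sum + ((L.drop (r + 1)).map pre).sum)
    using 1 <;>
  simp only [cycleConf, List.take_add_one, List.getElem?_eq_getElem hr,
    List.drop_eq_getElem_cons hr, Option.toList_some, List.map_append, List.map_cons,
    List.map_nil, List.sum_append, List.sum_cons, List.sum_nil] <;>
  abel

theorem Balanced.filter_not_silentT {m : Multiset (PTrans Q)} (hm : Balanced m) :
    Balanced (m.filter fun t => ¬ SilentT t) := by
  have hsilent : ((m.filter SilentT).map pre).sum = ((m.filter SilentT).map post).sum :=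
    congrArg Multiset.sum (Multiset.map_congr rfl fun t ht => (Multiset.mem_filter.1 ht).2)
  unfold Balanced at hm ⊢
  rw [← Multiset.filter_add_not SilentT m, Multiset.map_add, Multiset.map_add,
    Multiset.sum_add, Multiset.sum_add, hsilent] at hm
  exact add_left_cancel hm

theorem count_sum_map_eq_sum_count_mul {R : Type*} [CommSemiring R] {m : Multiset (PTrans Q)}
    {U : Finset (PTrans Q)} (hm : m.toFinset ⊆ U) (g : PTrans Q → Multiset Q) (q : Q) :
    ((m.map g).sum.count q : R) = ∑ t ∈ U, (m.count t : R) * ((g t).count q : R) := by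
  rw [Multiset.count_sum, Multiset.sum_map_eq_sum_count_nsmul hm]
  push_cast [smul_eq_mul]
  rfl

theorem balanced_iff_sum_count_mul_sub_eq_zero {R : Type*} [CommRing R] [CharZero R]
    {m : Multiset (PTrans Q)} {U : Finset (PTrans Q)} (hm : m.toFinset ⊆ U) :
    Balanced m ↔ ∀ q : Q, ∑ t ∈ U,
      (m.count t : R) * (((post t).count q : R) - ((pre t).count q : R)) = 0 := by
  simp only [mul_sub, Finset.sum_sub_distrib, ← count_sum_map_eq_sum_count_mul hm, sub_eq_zero,
    Nat.cast_inj, Balanced, Multiset.ext]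
  exact forall_congr' fun q => eq_comm

theorem exists_balanced_of_not_silentExec [Fintype Q] {T : Finset (PTrans Q)}
    {e : ℕ → Multiset Q} (he : IsExec T e) (hns : ¬ SilentExec e) :
    ∃ (m : Multiset (PTrans Q)) (t : PTrans Q), Balanced m ∧
      m.toFinset ⊆ T.filter (fun t => ¬ SilentT t) ∧ t ∈ m := by
  choose f hfT hf using he.2
  obtain ⟨C, hC⟩ := he.exists_infinite_setOf_eq
  obtain ⟨i, hi : e i = C⟩ := hC.nonempty
  obtain ⟨k, hik, hk⟩ := not_silentExec_iff.1 hns i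
  obtain ⟨j, hj : e j = C, hkj⟩ := hC.exists_gt k
  set m := (Finset.Ico i j).val.map f
  have hbal : Balanced m := by
    have h := add_sum_pre_eq_add_sum_post hf (i := i) (j := j) (by omega)
    rw [hi, hj] at h
    rw [Balanced, Multiset.map_map, Multiset.map_map]
    exact add_left_cancel h
  have hkm : f k ∈ m.filter fun t => ¬ SilentT t :=
    Multiset.mem_filter.2 ⟨Multiset.mem_map_of_mem f (Finset.mem_Ico.2 ⟨hik, hkj⟩),
      (hf k).eq_iff_silentT.not.1 hk⟩
  refine ⟨_, f k, hbal.filter_not_silentT, fun t ht => ?_, hkm⟩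
  obtain ⟨htm, hts⟩ := Multiset.mem_filter.1 (Multiset.mem_toFinset.1 ht)
  obtain ⟨l, -, rfl⟩ := Multiset.mem_map.1 htm
  exact Finset.mem_filter.2 ⟨hfT l, hts⟩

theorem exists_balanced_of_flow_solution {U : Finset (PTrans Q)} {x : PTrans Q → ℚ}
    (hflow : ∀ q : Q, ∑ t ∈ U, x t * (((post t).count q : ℚ) - ((pre t).count q : ℚ)) = 0)
    (hx : ∀ t ∈ U, 0 ≤ x t) {t₀ : PTrans Q} (ht₀ : t₀ ∈ U) (hpos : 0 < x t₀) :
    ∃ m : Multiset (PTrans Q), Balanced m ∧ m.toFinset ⊆ U ∧ t₀ ∈ m := by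
  obtain ⟨d, n, hd, hn⟩ := U.exists_pos_nat_mul_eq_natCast x hx
  set m := ∑ t ∈ U, Multiset.replicate (n t) t
  have hmU : m.toFinset ⊆ U := Multiset.toFinset_sum_replicate_subset U n
  have hcount : ∀ t ∈ U, (m.count t : ℚ) = d * x t := fun t ht => by
    rw [Multiset.count_sum_replicate_of_mem U n ht, hn t ht]
  refine ⟨m, (balanced_iff_sum_count_mul_sub_eq_zero (R := ℚ) hmU).2 fun q => ?_, hmU, ?_⟩
  · rw [Finset.sum_congr rfl fun t ht => by rw [hcount t ht, mul_assoc], ← Finset.mul_sum,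
      hflow q, mul_zero]
  · rw [← Multiset.count_pos, ← Nat.cast_pos (α := ℚ), hcount t₀ ht₀]
    exact mul_pos (Nat.cast_pos.2 hd) hpos

theorem Balanced.exists_nonsilent_exec {T : Finset (PTrans Q)} {m : Multiset (PTrans Q)}
    (hbal : Balanced m) (hmT : m.toFinset ⊆ T) {t₀ : PTrans Q} (ht₀ : t₀ ∈ m)
    (hs : ¬ SilentT t₀) : ∃ e : ℕ → Multiset Q, IsExec T e ∧ ¬ SilentExec e := by
  obtain ⟨L, rfl⟩ : ∃ L : List (PTrans Q), (L : Multiset (PTrans Q)) = m :=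
    ⟨m.toList, m.coe_toList⟩
  have hL : (L.map pre).sum = (L.map post).sum := by
    rwa [Balanced, Multiset.map_coe, Multiset.map_coe, Multiset.sum_coe, Multiset.sum_coe] at hbal
  obtain ⟨r, hr, hLr⟩ := List.mem_iff_getElem.1 (Multiset.mem_coe.1 ht₀)
  have hlen : 0 < L.length := Nat.zero_lt_of_lt hr
  have hstep : ∀ i, StepBy (L[i % L.length]'(Nat.mod_lt i hlen)) (cycleConf L (i % L.length))
      (cycleConf L ((i + 1) % L.length)) := fun i => by
    rw [← Nat.mod_add_mod, cycleConf_succ_mod hL (Nat.mod_lt i hlen)]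
    exact stepBy_cycleConf L _
  refine ⟨fun i => cycleConf L (i % L.length), ⟨(hstep 0).two_le_card, fun i =>
    ⟨_, hmT (Multiset.mem_toFinset.2 (List.getElem_mem (Nat.mod_lt i hlen))), hstep i⟩⟩,
    not_silentExec_iff.2 fun N => ⟨N * L.length + r, ?_, ?_⟩⟩
  · exact (Nat.le_mul_of_pos_right N hlen).trans (Nat.le_add_right _ _)
  · have hi : (N * L.length + r) % L.length = r := Nat.mul_add_mod_of_lt hr
    refine (hstep _).eq_iff_silentT.not.2 ?_
    simpa [hi, hLr] using hs

end PopProt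

open PopProt in
theorem nonsilent_execution_iff_flow_solution_general
    {Q A : Type*} [Fintype Q] [DecidableEq Q] [Fintype A]
    (P : Protocol Q A) :
    (∃ e : ℕ → Multiset Q, IsExec P.T e ∧ ¬ SilentExec e) ↔
    (∃ x : PTrans Q → ℚ,
      (∀ q : Q, ∑ t ∈ P.T.filter (fun t => ¬ SilentT t),
        x t * (((post t).count q : ℚ) - ((pre t).count q : ℚ)) = 0) ∧
      (∀ t ∈ P.T.filter (fun t => ¬ SilentT t), 0 ≤ x t) ∧
      (∃ t ∈ P.T.filter (fun t => ¬ SilentT t), 0 < x t)) := by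
  constructor
  · rintro ⟨e, he, hns⟩
    obtain ⟨m, t, hbal, hmU, ht⟩ := exists_balanced_of_not_silentExec he hns
    exact ⟨fun s => m.count s, (balanced_iff_sum_count_mul_sub_eq_zero hmU).1 hbal,
      fun t _ => by positivity, t, hmU (Multiset.mem_toFinset.2 ht),
      Nat.cast_pos.2 (Multiset.count_pos.2 ht)⟩
  · rintro ⟨x, hflow, hx, t₀, ht₀, hpos⟩
    obtain ⟨m, hbal, hmU, ht₀m⟩ := exists_balanced_of_flow_solution hflow hx ht₀ hpos
    exact hbal.exists_nonsilent_exec (hmU.trans (Finset.filter_subset _ _)) ht₀m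
      (Finset.mem_filter.1 ht₀).2

open PopProt in
/-- Lemma: a protocol has a non-silent execution iff there is a nonnegative, nonzero
rational solution of the flow equations supported on the non-silent transitions. -/
theorem nonsilent_execution_iff_flow_solution
    {Q A : Type*} [Fintype Q] [DecidableEq Q] [Nonempty Q] [Fintype A] [Nonempty A]
    (P : Protocol Q A) :
    (∃ e : ℕ → Multiset Q, IsExec P.T e ∧ ¬ SilentExec e) ↔
    (∃ x : PTrans Q → ℚ,
      (∀ q : Q, ∑ t ∈ P.T.filter (fun t => ¬ SilentT t),
        x t * (((post t).count q : ℚ) - ((pre t).count q : ℚ)) = 0) ∧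
      (∀ t ∈ P.T.filter (fun t => ¬ SilentT t), 0 ≤ x t) ∧
      (∃ t ∈ P.T.filter (fun t => ¬ SilentT t), 0 < x t)) :=
  nonsilent_execution_iff_flow_solution_general P
end

section
/- Let P = (Q, T, Σ, I, O) be a population protocol, let U ⊆ T and let S = T ∖ U. Then P is not U-dead if and only if there exist s ∈ S and a non-silent u ∈ U such that for every non-silent u' ∈ U, pre(u') is not ≤ pre(s) + (pre(u) ∸ post(s)) (where ∸ is truncated multiset difference). -/
/-! A `U`-dead configuration that reaches a configuration which is not `U`-dead has a first
step `D →s D'` leaving the `U`-dead configurations. Then `s ∉ U`, some non-silent `u ∈ U` is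
enabled at `D'`, and `pre s + (pre u ∸ post s) ≤ D`, so no non-silent `u' ∈ U` is enabled at
that smaller configuration. Conversely, under the stated condition the configuration
`pre s + (pre u ∸ post s)` is `U`-dead and firing `s` from it enables `u`. -/

theorem Relation.ReflTransGen.exists_step_of_not {α : Type*} {r : α → α → Prop} {p : α → Prop}
    {a b : α} (hab : Relation.ReflTransGen r a b) (ha : p a) (hb : ¬ p b) :
    ∃ c d, p c ∧ r c d ∧ ¬ p d := by
  induction hab with
  | refl => exact absurd ha hb
  | @tail c d _ hcd ih =>
    by_cases hc : p c
    · exact ⟨c, d, hc, hcd, hb⟩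
    · exact ih hc

namespace PopProt

variable {Q : Type*} [DecidableEq Q]

theorem sub_pre_add_post_eq_self_iff {t : PTrans Q} {C : Multiset Q} (h : pre t ≤ C) :
    C - pre t + post t = C ↔ SilentT t := by
  conv_lhs => rhs; rw [← tsub_add_cancel_of_le h]
  exact (add_right_inj _).trans eq_comm

theorem pre_le_sub_pre_add_post_iff {s u : PTrans Q} {D : Multiset Q} (hs : pre s ≤ D) :
    pre u ≤ D - pre s + post s ↔ pre s + (pre u - post s) ≤ D := by
  constructor
  · intro hu
    calc pre s + (pre u - post s) ≤ pre s + (D - pre s) :=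
          add_le_add_right (tsub_le_iff_right.2 hu) _
      _ = D := add_tsub_cancel_of_le hs
  · intro h
    calc pre u ≤ pre u - post s + post s := le_tsub_add
      _ ≤ D - pre s + post s := add_le_add_left (le_tsub_of_add_le_left h) _

theorem uDeadConf_iff {U : Finset (PTrans Q)} {C : Multiset Q} :
    UDeadConf U C ↔ ∀ t ∈ U, ¬ SilentT t → ¬ pre t ≤ C := by
  refine ⟨fun h t ht hns hle => hns ((sub_pre_add_post_eq_self_iff hle).1 (h t ht _ ⟨hle, rfl⟩)),
    ?_⟩
  rintro h t ht _ ⟨hle, rfl⟩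
  exact (sub_pre_add_post_eq_self_iff hle).2 (not_not.1 fun hns => h t ht hns hle)

theorem exists_witness_of_step_of_uDeadConf {T U : Finset (PTrans Q)} {D D' : Multiset Q}
    (hD : UDeadConf U D) (hstep : Step T D D') (hD' : ¬ UDeadConf U D') :
    ∃ s ∈ T \ U, ∃ u ∈ U, ¬ SilentT u ∧
      ∀ u' ∈ U, ¬ SilentT u' → ¬ pre u' ≤ pre s + (pre u - post s) := by
  obtain ⟨s, hsT, hs, rfl⟩ := hstep
  have hsU : s ∉ U := fun hsU => hD' (by rwa [hD s hsU _ ⟨hs, rfl⟩])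
  obtain ⟨u, huU, hnu, hu⟩ : ∃ u ∈ U, ¬ SilentT u ∧ pre u ≤ D - pre s + post s := by
    simpa [uDeadConf_iff] using hD'
  refine ⟨s, Finset.mem_sdiff.2 ⟨hsT, hsU⟩, u, huU, hnu, fun u' hu' hnu' hle => ?_⟩
  exact uDeadConf_iff.1 hD u' hu' hnu' (hle.trans ((pre_le_sub_pre_add_post_iff hs).1 hu))

theorem not_uDead_of_witness {T U : Finset (PTrans Q)} {s u : PTrans Q} (hs : s ∈ T) (hu : u ∈ U)
    (hnu : ¬ SilentT u) (hmin : ∀ u' ∈ U, ¬ SilentT u' → ¬ pre u' ≤ pre s + (pre u - post s)) :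
    ¬ UDead T U := by
  intro hdead
  set C₀ := pre s + (pre u - post s)
  have hcard : 2 ≤ Multiset.card C₀ := by
    simp only [C₀, Multiset.card_add, pre, Multiset.card_pair]
    omega
  have hstep : Step T C₀ (C₀ - pre s + post s) := ⟨s, hs, le_self_add, rfl⟩
  have hu_enabled : pre u ≤ C₀ - pre s + post s :=
    (pre_le_sub_pre_add_post_iff le_self_add).2 le_rfl
  exact uDeadConf_iff.1 (hdead C₀ hcard (uDeadConf_iff.2 hmin) _ (.single hstep)) u hu hnu
    hu_enabled

end PopProt

open PopProt in
theorem not_udead_characterization_general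
    {Q A : Type*} [Fintype Q] [DecidableEq Q] [Fintype A]
    (P : Protocol Q A) (U : Finset (PTrans Q)) :
    ¬ UDead P.T U ↔
    (∃ s ∈ P.T \ U, ∃ u ∈ U, ¬ SilentT u ∧
      ∀ u' ∈ U, ¬ SilentT u' → ¬ (pre u' ≤ pre s + (pre u - post s))) := by
  constructor
  · intro h
    obtain ⟨C₀, -, hC₀, C, hreach, hC⟩ : ∃ C₀, 2 ≤ Multiset.card C₀ ∧ UDeadConf U C₀ ∧
        ∃ C, Reach P.T C₀ C ∧ ¬ UDeadConf U C := by
      simpa [UDead] using h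
    obtain ⟨D, D', hD, hstep, hD'⟩ := hreach.exists_step_of_not hC₀ hC
    exact exists_witness_of_step_of_uDeadConf hD hstep hD'
  · rintro ⟨s, hs, u, hu, hnu, hmin⟩
    exact not_uDead_of_witness (Finset.mem_sdiff.1 hs).1 hu hnu hmin

open PopProt in
/-- Lemma: the protocol is not `U`-dead iff there are `s ∈ T ∖ U` and a non-silent
`u ∈ U` such that `pre u' ≰ pre s + (pre u ∸ post s)` for every non-silent `u' ∈ U`. -/
theorem not_udead_characterization
    {Q A : Type*} [Fintype Q] [DecidableEq Q] [Nonempty Q] [Fintype A] [Nonempty A]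
    (P : Protocol Q A) (U : Finset (PTrans Q)) (hU : U ⊆ P.T) :
    ¬ UDead P.T U ↔
    (∃ s ∈ P.T \ U, ∃ u ∈ U, ¬ SilentT u ∧
      ∀ u' ∈ U, ¬ SilentT u' → ¬ (pre u' ≤ pre s + (pre u - post s))) :=
  not_udead_characterization_general P U
end

section
/- In a population protocol, potential reachability over-approximates reachability: for all configurations C and C', if C →* C' then C ⇒ C'; indeed, if C →w C' for a finite transition sequence w, then C ⇒ₓ C' where x(t) is the number of occurrences of t in w. -/
/-! Along a run `C →w C'`, a trap of the transitions of `w` that receives a token stays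
marked up to `C'`, and a siphon of those transitions that is empty in `C` stays empty, so no
transition of `w` can ever consume from it; counting tokens step by step gives the flow
equations. -/

namespace PopProt

variable {Q : Type*} [DecidableEq Q] {T : Finset (PTrans Q)} {t : PTrans Q}
  {w w₁ w₂ : List (PTrans Q)} {C D C' : Multiset Q} {R : Finset Q} {q : Q}

theorem StepBy.count_eq (h : StepBy t C D) (q : Q) :
    (D.count q : ℤ) = C.count q + ((post t).count q - (pre t).count q) := by
  obtain ⟨hle, rfl⟩ := h
  rw [Multiset.count_add, Multiset.count_sub,
    Nat.cast_add, Nat.cast_sub (Multiset.count_le_of_le q hle)]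
  ring

theorem StepBy.mem_of_mem_post (h : StepBy t C D) (hq : q ∈ post t) : q ∈ D :=
  h.2 ▸ Multiset.mem_add.2 (Or.inr hq)

theorem StepBy.mem_of_mem_of_notMem_pre (h : StepBy t C D) (hqC : q ∈ C) (hq : q ∉ pre t) :
    q ∈ D := by
  rw [← Multiset.count_pos] at hqC ⊢
  have := h.count_eq q
  rw [Multiset.count_eq_zero.2 hq] at this
  omega

theorem StepBy.mem_or_mem_post (h : StepBy t C D) (hq : q ∈ D) : q ∈ C ∨ q ∈ post t := by
  rw [h.2, Multiset.mem_add] at hq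
  exact hq.imp_left (Multiset.mem_of_le (Multiset.sub_le_self _ _))

theorem seqStep_append :
    SeqStep T (w₁ ++ w₂) C C' ↔ ∃ D, SeqStep T w₁ C D ∧ SeqStep T w₂ D C' := by
  induction w₁ generalizing C with
  | nil => exact ⟨fun h => ⟨C, rfl, h⟩, fun ⟨_, rfl, h⟩ => h⟩
  | cons t w₁ ih =>
    simp only [List.cons_append, SeqStep, ih]
    constructor
    · rintro ⟨ht, E, hE, D, hw₁, hw₂⟩
      exact ⟨D, ⟨ht, E, hE, hw₁⟩, hw₂⟩
    · rintro ⟨D, ⟨ht, E, hE, hw₁⟩, hw₂⟩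
      exact ⟨ht, E, hE, D, hw₁, hw₂⟩

theorem seqStep_cons_append :
    SeqStep T (w₁ ++ t :: w₂) C C' ↔
      ∃ D E, SeqStep T w₁ C D ∧ t ∈ T ∧ StepBy t D E ∧ SeqStep T w₂ E C' := by
  simp only [seqStep_append, SeqStep]
  constructor
  · rintro ⟨D, hw₁, ht, E, hE, hw₂⟩
    exact ⟨D, E, hw₁, ht, hE, hw₂⟩
  · rintro ⟨D, E, hw₁, ht, hE, hw₂⟩
    exact ⟨D, hw₁, ht, E, hE, hw₂⟩

theorem SeqStep.mem_of_mem (h : SeqStep T w C C') (ht : t ∈ w) : t ∈ T := by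
  obtain ⟨w₁, w₂, rfl⟩ := List.append_of_mem ht
  obtain ⟨_, _, _, htT, _⟩ := seqStep_cons_append.1 h
  exact htT

theorem Reach.exists_seqStep (h : Reach T C C') : ∃ w, SeqStep T w C C' := by
  induction h with
  | refl => exact ⟨[], rfl⟩
  | tail _ hstep ih =>
    obtain ⟨w, hw⟩ := ih
    obtain ⟨t, ht, hstep⟩ := hstep
    exact ⟨w ++ [t], seqStep_append.2 ⟨_, hw, ht, _, hstep, rfl⟩⟩

theorem SeqStep.count_eq (h : SeqStep T w C C') (q : Q) :
    (C'.count q : ℤ) =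
      C.count q + (w.map fun t => ((post t).count q - (pre t).count q : ℤ)).sum := by
  induction w generalizing C with
  | nil =>
    rw [show C' = C from h]
    simp
  | cons t w ih =>
    obtain ⟨-, D, hD, hw⟩ := h
    rw [ih hw, hD.count_eq, List.map_cons, List.sum_cons]
    ring

theorem SeqStep.flowEq (h : SeqStep T w C C') : FlowEq T C C' (fun t => w.count t) := by
  intro q
  have hsub : w.toFinset ⊆ T := fun t ht => h.mem_of_mem (List.mem_toFinset.1 ht)
  -- `Finset.sum_list_map_count` counts with the `BEq` instance coming from `DecidableEq`,
  -- while `w.count` elaborates with the one of the product type; `congr!` identifies them.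
  rw [h.count_eq, Finset.sum_list_map_count, Finset.sum_subset hsub]
  · simp only [nsmul_eq_mul]
    congr!
  · intro t _ ht
    rw [@List.count_eq_zero_of_not_mem _ instBEqOfDecidableEq _ _ _ (mt List.mem_toFinset.2 ht),
      zero_smul]

theorem SeqStep.marks_of_marks_of_trap (h : SeqStep T w C C')
    (htrap : ∀ t ∈ w, (∃ q ∈ R, q ∈ pre t) → ∃ q ∈ R, q ∈ post t)
    (hC : ∃ q ∈ R, q ∈ C) : ∃ q ∈ R, q ∈ C' := by
  induction w generalizing C with
  | nil => exact (show C' = C from h) ▸ hC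
  | cons t w ih =>
    obtain ⟨-, D, hD, hw⟩ := h
    refine ih hw (fun s hs => htrap s (List.mem_cons_of_mem t hs)) ?_
    by_cases hpre : ∃ q ∈ R, q ∈ pre t
    · obtain ⟨q, hqR, hq⟩ := htrap t List.mem_cons_self hpre
      exact ⟨q, hqR, hD.mem_of_mem_post hq⟩
    · obtain ⟨q, hqR, hqC⟩ := hC
      exact ⟨q, hqR, hD.mem_of_mem_of_notMem_pre hqC fun hq => hpre ⟨q, hqR, hq⟩⟩

theorem SeqStep.marks_of_mem_post (h : SeqStep T w C C')
    (htrap : ∀ t ∈ w, (∃ q ∈ R, q ∈ pre t) → ∃ q ∈ R, q ∈ post t)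
    (ht : t ∈ w) (hpost : ∃ q ∈ R, q ∈ post t) : ∃ q ∈ R, q ∈ C' := by
  obtain ⟨w₁, w₂, rfl⟩ := List.append_of_mem ht
  obtain ⟨D, E, -, -, hE, hw₂⟩ := seqStep_cons_append.1 h
  obtain ⟨q, hqR, hq⟩ := hpost
  exact hw₂.marks_of_marks_of_trap (fun s hs => htrap s (by simp [hs]))
    ⟨q, hqR, hE.mem_of_mem_post hq⟩

theorem SeqStep.notMem_of_siphon (h : SeqStep T w C C')
    (hsiph : ∀ t ∈ w, (∃ q ∈ R, q ∈ post t) → ∃ q ∈ R, q ∈ pre t)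
    (hC : ∀ q ∈ R, q ∉ C) : ∀ q ∈ R, q ∉ C' := by
  induction w generalizing C with
  | nil => exact (show C' = C from h) ▸ hC
  | cons t w ih =>
    obtain ⟨-, D, hD, hw⟩ := h
    refine ih hw (fun s hs => hsiph s (List.mem_cons_of_mem t hs)) ?_
    intro q hqR hqD
    rcases hD.mem_or_mem_post hqD with hqC | hq
    · exact hC q hqR hqC
    · obtain ⟨p, hpR, hp⟩ := hsiph t List.mem_cons_self ⟨q, hqR, hq⟩
      exact hC p hpR (Multiset.mem_of_le hD.1 hp)

theorem SeqStep.notMem_pre_of_siphon (h : SeqStep T w C C')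
    (hsiph : ∀ t ∈ w, (∃ q ∈ R, q ∈ post t) → ∃ q ∈ R, q ∈ pre t)
    (hC : ∀ q ∈ R, q ∉ C) (ht : t ∈ w) : ∀ q ∈ R, q ∉ pre t := by
  obtain ⟨w₁, w₂, rfl⟩ := List.append_of_mem ht
  obtain ⟨D, E, hw₁, -, hE, -⟩ := seqStep_cons_append.1 h
  have hD := hw₁.notMem_of_siphon (fun s hs => hsiph s (by simp [hs])) hC
  exact fun q hqR hq => hD q hqR (Multiset.mem_of_le hE.1 hq)

theorem IsTrap.exists_mem_post {U : Finset (PTrans Q)} (hR : IsTrap T U R) (htT : t ∈ T)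
    (htU : t ∈ U) (hpre : ∃ q ∈ R, q ∈ pre t) : ∃ q ∈ R, q ∈ post t :=
  (Finset.mem_filter.1 (hR (Finset.mem_inter.2 ⟨Finset.mem_filter.2 ⟨htT, hpre⟩, htU⟩))).2

theorem IsSiphon.exists_mem_pre {U : Finset (PTrans Q)} (hR : IsSiphon T U R) (htT : t ∈ T)
    (htU : t ∈ U) (hpost : ∃ q ∈ R, q ∈ post t) : ∃ q ∈ R, q ∈ pre t :=
  (Finset.mem_filter.1 (hR (Finset.mem_inter.2 ⟨Finset.mem_filter.2 ⟨htT, hpost⟩, htU⟩))).2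

theorem mem_suppIn_count : t ∈ suppIn T (fun s => w.count s) ↔ t ∈ T ∧ t ∈ w := by
  simp only [suppIn, Finset.mem_filter, ne_eq, List.count_eq_zero, not_not]

theorem SeqStep.potReach (h : SeqStep T w C C') : PotReach T C C' (fun t => w.count t) := by
  have hsupp {t} (ht : t ∈ w) : t ∈ suppIn T (fun s => w.count s) :=
    mem_suppIn_count.2 ⟨h.mem_of_mem ht, ht⟩
  refine ⟨h.flowEq, fun R htrap hC' => ?_, fun R hsiph hC => ?_⟩
  · refine Finset.eq_empty_of_forall_notMem fun t ht => ?_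
    obtain ⟨htR, htw⟩ := Finset.mem_inter.1 ht
    obtain ⟨q, hqR, hq⟩ := h.marks_of_mem_post
      (fun s hs => htrap.exists_mem_post (h.mem_of_mem hs) (hsupp hs))
      (mem_suppIn_count.1 htw).2 (Finset.mem_filter.1 htR).2
    exact hC' q hqR hq
  · refine Finset.eq_empty_of_forall_notMem fun t ht => ?_
    obtain ⟨htR, htw⟩ := Finset.mem_inter.1 ht
    obtain ⟨q, hqR, hq⟩ := (Finset.mem_filter.1 htR).2
    exact h.notMem_pre_of_siphon
      (fun s hs => hsiph.exists_mem_pre (h.mem_of_mem hs) (hsupp hs))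
      hC (mem_suppIn_count.1 htw).2 q hqR hq

end PopProt

open PopProt in
theorem potReach_overapproximates_reach_general
    {Q A : Type*} [Fintype Q] [DecidableEq Q] [Fintype A]
    (P : Protocol Q A) :
    (∀ (w : List (PTrans Q)) (C C' : Multiset Q), 2 ≤ Multiset.card C →
      SeqStep P.T w C C' → PotReach P.T C C' (fun t => w.count t)) ∧
    (∀ C C' : Multiset Q, 2 ≤ Multiset.card C → Reach P.T C C' →
      ∃ x : PTrans Q → ℕ, PotReach P.T C C' x) :=
  ⟨fun _ _ _ _ h => h.potReach, fun _ _ _ h =>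
    let ⟨_, hw⟩ := Reach.exists_seqStep h
    ⟨_, hw.potReach⟩⟩

open PopProt in
/-- Potential reachability over-approximates reachability: if `C →w C'` then
`C ⇒ₓ C'` where `x t = |w|_t`, and if `C →* C'` then `C ⇒ C'`. -/
theorem potReach_overapproximates_reach
    {Q A : Type*} [Fintype Q] [DecidableEq Q] [Nonempty Q] [Fintype A] [Nonempty A]
    (P : Protocol Q A) :
    (∀ (w : List (PTrans Q)) (C C' : Multiset Q), 2 ≤ Multiset.card C →
      SeqStep P.T w C C' → PotReach P.T C C' (fun t => w.count t)) ∧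
    (∀ C C' : Multiset Q, 2 ≤ Multiset.card C → Reach P.T C C' →
      ∃ x : PTrans Q → ℕ, PotReach P.T C C' x) :=
  potReach_overapproximates_reach_general P
end

section
/- For the threshold protocol P_thr: for all configurations C, C' and every x : T → ℕ, if (C, C', x) is a solution to the flow equations, then val(C) = val(C'). -/
namespace PopProt

section Threshold

variable (k : ℕ) (a : Fin k → ℤ) (c : ℤ)

/-- `vmax = max(|a₁|, …, |a_k|, |c| + 1)`. -/
def vmax : ℤ := max ((Finset.univ.sup fun i : Fin k => (a i).natAbs : ℕ) : ℤ) (|c| + 1)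

lemma vmax_pos : 0 < vmax k a c := by
  have h : (0 : ℤ) ≤ |c| := abs_nonneg c
  exact lt_max_of_lt_right (by omega)

/-- The value range `[-vmax, vmax]`. -/
abbrev Vr := ↥(Finset.Icc (-(vmax k a c)) (vmax k a c))

/-- States of the threshold protocol: a leader bit, a value and an opinion. -/
abbrev Qthr := Bool × Vr k a c × Bool

/-- `f(m, n) = max(-vmax, min(vmax, m + n))`. -/
def fthr (m n : ℤ) : ℤ := max (-(vmax k a c)) (min (vmax k a c) (m + n))

/-- `g(m, n) = (m + n) - f(m, n)`. -/
def gthr (m n : ℤ) : ℤ := m + n - fthr k a c m n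

/-- `b(m, n) = (f(m, n) < c)`. -/
def bthr (m n : ℤ) : Bool := decide (fthr k a c m n < c)

lemma fthr_mem (m n : ℤ) : fthr k a c m n ∈ Finset.Icc (-(vmax k a c)) (vmax k a c) := by
  have h := vmax_pos k a c
  simp only [Finset.mem_Icc, fthr]
  exact ⟨le_max_left _ _, max_le (by omega) (min_le_left _ _)⟩

lemma gthr_mem (m n : ℤ) (hm : m ∈ Finset.Icc (-(vmax k a c)) (vmax k a c))
    (hn : n ∈ Finset.Icc (-(vmax k a c)) (vmax k a c)) :
    gthr k a c m n ∈ Finset.Icc (-(vmax k a c)) (vmax k a c) := by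
  have h := vmax_pos k a c
  simp only [Finset.mem_Icc] at hm hn ⊢
  simp only [gthr, fthr]
  rw [max_def, min_def]
  split_ifs <;> omega

/-- `f` on the value range. -/
def fV (m n : Vr k a c) : Vr k a c := ⟨fthr k a c m n, fthr_mem k a c m n⟩

/-- `g` on the value range. -/
def gV (m n : Vr k a c) : Vr k a c := ⟨gthr k a c m n, gthr_mem k a c m n m.2 n.2⟩

instance : DecidableEq (Vr k a c) := by unfold Vr; infer_instance

noncomputable instance : Fintype (Vr k a c) := by unfold Vr; infer_instance

instance : DecidableEq (Qthr k a c) := by infer_instance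

noncomputable instance : Fintype (Qthr k a c) := by infer_instance

/-- Non-silent transitions of the threshold protocol:
`(1, n, o), (l, n', o') ↦ (1, f(n, n'), b(n, n')), (0, g(n, n'), b(n, n'))`. -/
def IsThrTrans (t : PTrans (Qthr k a c)) : Prop :=
  ∃ (n n' : Vr k a c) (l o o' : Bool),
    t = ((true, n, o), (l, n', o'),
         (true, fV k a c n n', bthr k a c (n : ℤ) (n' : ℤ)),
         (false, gV k a c n n', bthr k a c (n : ℤ) (n' : ℤ)))

noncomputable instance : DecidablePred (IsThrTrans k a c) := fun t => by
  unfold IsThrTrans; infer_instance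

/-- Transition set of the threshold protocol. -/
noncomputable def Tthr : Finset (PTrans (Qthr k a c)) :=
  Finset.univ.filter fun t => IsThrTrans k a c t ∨ IsSilentPair t

lemma a_mem (i : Fin k) : a i ∈ Finset.Icc (-(vmax k a c)) (vmax k a c) := by
  have h1 : (a i).natAbs ≤ Finset.univ.sup fun j : Fin k => (a j).natAbs :=
    Finset.le_sup (f := fun j : Fin k => (a j).natAbs) (Finset.mem_univ i)
  have h2 : ((Finset.univ.sup fun j : Fin k => (a j).natAbs : ℕ) : ℤ) ≤ vmax k a c :=
    le_max_left _ _
  simp only [Finset.mem_Icc]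
  omega

/-- The threshold protocol `P_thr` computing `a₁x₁ + ⋯ + a_kx_k < c`. -/
noncomputable def Pthr : Protocol (Qthr k a c) (Fin k) where
  T := Tthr k a c
  total := fun p q => ⟨p, q, by
    simp only [Tthr, Finset.mem_filter, Finset.mem_univ, true_and]
    exact Or.inr ⟨p, q, rfl⟩⟩
  inp := fun i => (true, ⟨a i, a_mem k a c i⟩, decide (a i < c))
  out := fun q => q.2.2

/-- `val(C) = Σ_q C(q) · val(q)` where `val(ℓ, n, o) = n`. -/
def valC (C : Multiset (Qthr k a c)) : ℤ := (C.map fun q => ((q.2.1 : ℤ))).sum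

/-- `C` contains a leader. -/
def hasLeader (C : Multiset (Qthr k a c)) : Prop := ∃ q ∈ C, q.1 = true

/-- The value `0` of the value range. -/
def zeroV : Vr k a c :=
  ⟨0, by have := vmax_pos k a c; simp only [Finset.mem_Icc]; omega⟩

/-- `L₀ = {(1, x, 0) : c ≤ x ≤ vmax}`. -/
noncomputable def L0set : Finset (Qthr k a c) :=
  Finset.univ.filter fun q =>
    q.1 = true ∧ q.2.2 = false ∧ c ≤ (q.2.1 : ℤ) ∧ (q.2.1 : ℤ) ≤ vmax k a c

/-- `L₁ = {(1, x, 1) : -vmax ≤ x < c}`. -/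
noncomputable def L1set : Finset (Qthr k a c) :=
  Finset.univ.filter fun q =>
    q.1 = true ∧ q.2.2 = true ∧ -(vmax k a c) ≤ (q.2.1 : ℤ) ∧ (q.2.1 : ℤ) < c

/-- `N₀ = {(0, 0, 0)}`. -/
def N0set : Finset (Qthr k a c) := {(false, zeroV k a c, false)}

/-- `N₁ = {(0, 0, 1)}`. -/
def N1set : Finset (Qthr k a c) := {(false, zeroV k a c, true)}

/-- `T₁ = {t ∈ T : pre t ≠ ⟦q, r⟧ for all q ∈ L₀, r ∈ N₁}`. -/
noncomputable def T1thr : Finset (PTrans (Qthr k a c)) :=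
  (Tthr k a c).filter fun t => ∀ q ∈ L0set k a c, ∀ r ∈ N1set k a c, pre t ≠ {q, r}

/-- `T₂ = T ∖ T₁`. -/
noncomputable def T2thr : Finset (PTrans (Qthr k a c)) := Tthr k a c \ T1thr k a c

/-- `S₁ = {t ∈ T : pre t ≠ ⟦q, r⟧ for all q ∈ L₁, r ∈ N₀}`. -/
noncomputable def S1thr : Finset (PTrans (Qthr k a c)) :=
  (Tthr k a c).filter fun t => ∀ q ∈ L1set k a c, ∀ r ∈ N0set k a c, pre t ≠ {q, r}

/-- `S₂ = T ∖ S₁`. -/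
noncomputable def S2thr : Finset (PTrans (Qthr k a c)) := Tthr k a c \ S1thr k a c

end Threshold

end PopProt

namespace PopProt

variable {Q : Type*} [Fintype Q] [DecidableEq Q] {M : Type*} [AddCommGroup M]

theorem sum_map_eq_sum_count_zsmul (C : Multiset Q) (v : Q → M) :
    (C.map v).sum = ∑ q, (C.count q : ℤ) • v q := by
  simp only [Nat.cast_smul_eq_nsmul, Finset.sum_multiset_map_count]
  refine Finset.sum_subset (Finset.subset_univ _) fun q _ hq => ?_
  rw [Multiset.count_eq_zero.mpr (by simpa using hq), zero_smul]

theorem sum_map_post_sub_sum_map_pre (t : PTrans Q) (v : Q → M) :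
    ((post t).map v).sum - ((pre t).map v).sum =
      ∑ q, (((post t).count q : ℤ) - (pre t).count q) • v q := by
  simp only [sum_map_eq_sum_count_zsmul, sub_smul, Finset.sum_sub_distrib]

theorem FlowEq.sum_map_eq {T : Finset (PTrans Q)} {C C' : Multiset Q} {x : PTrans Q → ℕ}
    (h : FlowEq T C C' x) (v : Q → M)
    (hv : ∀ t ∈ T, ((post t).map v).sum = ((pre t).map v).sum) :
    (C.map v).sum = (C'.map v).sum := by
  have displacement_zero : ∑ t ∈ T, (x t : ℤ) •
      (((post t).map v).sum - ((pre t).map v).sum) = 0 :=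
    Finset.sum_eq_zero fun t ht => by rw [hv t ht, sub_self, smul_zero]
  simp only [sum_map_post_sub_sum_map_pre, Finset.smul_sum, smul_smul] at displacement_zero
  rw [Finset.sum_comm] at displacement_zero
  simp only [sum_map_eq_sum_count_zsmul, h _, add_smul, Finset.sum_add_distrib, Finset.sum_smul,
    displacement_zero, add_zero]

section Threshold

variable (k : ℕ) (a : Fin k → ℤ) (c : ℤ)

theorem Tthr_conserves_val :
    ∀ t ∈ Tthr k a c, ((post t).map fun q => (q.2.1 : ℤ)).sum =
      ((pre t).map fun q => (q.2.1 : ℤ)).sum := by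
  intro t ht
  obtain ⟨n, n', l, o, o', rfl⟩ | ⟨p, q, rfl⟩ :
      IsThrTrans k a c t ∨ IsSilentPair t := (Finset.mem_filter.mp ht).2
  · simp only [pre, post, Multiset.insert_eq_cons, Multiset.map_cons, Multiset.map_singleton,
      Multiset.sum_cons, Multiset.sum_singleton, fV, gV, gthr, add_sub_cancel]
  · rfl

end Threshold

end PopProt

open PopProt in
theorem threshold_flowEq_preserves_val_general
    (k : ℕ) (a : Fin k → ℤ) (c : ℤ)
    (C C' : Multiset (Qthr k a c))
    (x : PTrans (Qthr k a c) → ℕ) (h : FlowEq (Pthr k a c).T C C' x) :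
    valC k a c C = valC k a c C' :=
  h.sum_map_eq _ (Tthr_conserves_val k a c)

open PopProt in
/-- For the threshold protocol: solutions of the flow equations preserve `val`. -/
theorem threshold_flowEq_preserves_val
    (k : ℕ) (a : Fin k → ℤ) (c : ℤ) (hk : 1 ≤ k)
    (C C' : Multiset (Qthr k a c)) (hC : 2 ≤ Multiset.card C) (hC' : 2 ≤ Multiset.card C')
    (x : PTrans (Qthr k a c) → ℕ) (h : FlowEq (Pthr k a c).T C C' x) :
    valC k a c C = valC k a c C' :=
  threshold_flowEq_preserves_val_general k a c C C' x h
end
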